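/- Consider the Gaussian 1-factor model with weak residual dependence: Z_j = α_j W + ψ_j ε_j, j = 1,…,D, where W ~ N(0,1) is independent of ε_D = (ε₁,…,ε_D)ᵀ ~ N(0, Ω_D), Ω_D is a correlation matrix, the loadings satisfy −1 < liminf α_j ≤ limsup α_j < 1 (uniformly bounded away from ±1) with ψ_j = √(1−α_j²), and q̄_D := D⁻¹ Σ_{j=1}^D α_j²/ψ_j² → q > 0. Assume the residual dependence is weak in the sense that Var(D^{−1/2} Σ_{j=1}^D α_j ε_j/ψ_j) = D⁻¹ Σ_{j=1}^D Σ_{k=1}^D α_j α_k ω_{jk}/(ψ_j ψ_k) is bounded uniformly in D (this holds, in particular, when the largest eigenvalue of Ω_D is bounded uniformly in D — the approximate factor model condition — or under the assumption 0 < liminf_D E(S_D²)/D ≤ limsup_D E(S_D²)/D < M with S_D = Σ_{j=1}^D ε_j, combined with the loading bounds). Then the factor score w̃_D = (1+q_D)⁻¹ A_Dᵀ Ψ_D⁻² Z_D, defined from the (misspecified) conditional-independence model, still satisfies w̃_D − W = O_p(D^{−1/2}). -/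

import Mathlib

/-!
STATEMENT 19: Gaussian 1-factor model with weak residual dependence:
`Z_j = α_j W + ψ_j ε_j` with `W ~ N(0,1)` independent of the centered Gaussian
disturbance sequence `(ε_j)` with correlation matrix `Ω_D`, loadings uniformly bounded
away from `±1`, `q̄_D → q > 0`, and weak residual dependence
`Var(D^{−1/2} Σ_{j<D} α_j ε_j/ψ_j)` bounded uniformly in `D`.  Then the factor score
`w̃_D = (1+q_D)⁻¹ A_Dᵀ Ψ_D⁻² Z_D` (defined from the misspecified
conditional-independence model) still satisfies `w̃_D − W = O_p(D^{−1/2})`.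
-/

open MeasureTheory ProbabilityTheory Filter Finset
open scoped NNReal ENNReal

/-- `X_D = O_p(a_D)`. -/
def IsBigOp {Om : Type*} [MeasurableSpace Om] (μ : Measure Om)
    (X : ℕ → Om → ℝ) (a : ℕ → ℝ) : Prop :=
  ∀ ε : ℝ, 0 < ε → ∃ M : ℝ, 0 < M ∧
    ∀ᶠ D in atTop, μ {ω | M * a D < |X D ω|} < ENNReal.ofReal ε


noncomputable def gtail (t : ℝ) : ENNReal := gaussianReal 0 1 {x : ℝ | t < |x|}

lemma gtail_meas_set (t : ℝ) : MeasurableSet {x : ℝ | t < |x|} :=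
  measurableSet_lt measurable_const measurable_id.abs

lemma gtail_anti {s t : ℝ} (h : s ≤ t) : gtail t ≤ gtail s :=
  measure_mono (fun x hx => lt_of_le_of_lt h hx)

lemma gtail_tendsto : Tendsto (fun n : ℕ => gtail (n : ℝ)) atTop (nhds 0) := by
  have h := tendsto_measure_iInter_atTop (μ := gaussianReal 0 1)
    (s := fun n : ℕ => {x : ℝ | (n : ℝ) < |x|})
    (fun n => (gtail_meas_set (n : ℝ)).nullMeasurableSet)
    (fun n m hnm x hx => lt_of_le_of_lt (by exact_mod_cast hnm : (n:ℝ) ≤ (m:ℝ)) hx)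
    ⟨0, measure_ne_top _ _⟩
  have he : (⋂ n : ℕ, {x : ℝ | (n : ℝ) < |x|}) = ∅ := by
    ext x
    simp only [Set.mem_iInter, Set.mem_setOf_eq, Set.mem_empty_iff_false, iff_false, not_forall,
      not_lt]
    obtain ⟨n, hn⟩ := exists_nat_gt |x|
    exact ⟨n, hn.le⟩
  rw [he, measure_empty] at h
  exact h

lemma gauss_tail_le (v : ℝ≥0) {a s : ℝ} (ha : 0 < a) (hs : 0 < s)
    (hv : Real.sqrt v ≤ s) :
    gaussianReal 0 v {x : ℝ | a < |x|} ≤ gtail (a / s) := by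
  by_cases h0 : v = 0
  · subst h0
    rw [gaussianReal_zero_var, Measure.dirac_apply' _ (gtail_meas_set a)]
    have : (0:ℝ) ∉ {x : ℝ | a < |x|} := by simp [ha.not_gt]
    simp [Set.indicator_of_notMem this]
  · set c := Real.sqrt v with hc
    have hcpos : 0 < c := Real.sqrt_pos.2 (by positivity)
    have hmap : (gaussianReal 0 1).map (c * ·) = gaussianReal 0 v := by
      rw [gaussianReal_map_const_mul]
      congr 1
      · simp
      · ext
        simp [hc, Real.sq_sqrt v.2]
    rw [← hmap, Measure.map_apply (measurable_const_mul c) (gtail_meas_set a)]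
    refine measure_mono ?_
    intro x hx
    simp only [Set.mem_preimage, Set.mem_setOf_eq] at hx ⊢
    have h1 : a < c * |x| := by rwa [abs_mul, abs_of_pos hcpos] at hx
    have h2 : c * |x| ≤ s * |x| := mul_le_mul_of_nonneg_right hv (abs_nonneg x)
    rw [div_lt_iff₀ hs]
    nlinarith


set_option maxHeartbeats 1000000 in
theorem one_factor_residual_dependence_factor_score_consistency
    {Om : Type*} [MeasurableSpace Om] (μ : Measure Om) [IsProbabilityMeasure μ]
    (W : Om → ℝ) (ε : ℕ → Om → ℝ)
    (hWmeas : Measurable W) (hεmeas : ∀ j, Measurable (ε j))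
    (hWlaw : μ.map W = gaussianReal 0 1)
    -- the disturbance sequence is jointly centered Gaussian with correlation
    -- matrix `Ω = (ω_{jk})`
    (Om' : ℕ → ℕ → ℝ)
    (hgauss : ∀ (s : Finset ℕ) (cvec : ℕ → ℝ),
      μ.map (fun ω => ∑ j ∈ s, cvec j * ε j ω) =
        gaussianReal 0
          (Real.toNNReal (∑ j ∈ s, ∑ k ∈ s, cvec j * cvec k * Om' j k)))
    (hcov : ∀ j k, ∫ ω, ε j ω * ε k ω ∂μ = Om' j k)
    (hdiag : ∀ j, Om' j j = 1)
    -- `W` is independent of the disturbances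
    (hWε : IndepFun W (fun ω (j : ℕ) => ε j ω) μ)
    -- loadings in `(−1,1)`, uniformly bounded away from `±1`
    (α : ℕ → ℝ) (hα : ∀ j, |α j| < 1)
    (hliminf : -1 < Filter.liminf α atTop) (hlimsup : Filter.limsup α atTop < 1)
    (ψ : ℕ → ℝ) (hψ : ∀ j, ψ j = Real.sqrt (1 - α j ^ 2))
    (q : ℝ) (hqpos : 0 < q)
    (hq : Tendsto (fun D : ℕ => (D:ℝ)⁻¹ * ∑ j ∈ range D, α j ^ 2 / ψ j ^ 2)
      atTop (nhds q))
    -- weak residual dependence: the variance of `D^{−1/2} Σ_{j<D} α_j ε_j / ψ_j`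
    -- is bounded uniformly in `D`
    (hvar : ∃ C : ℝ, ∀ D : ℕ, (D:ℝ)⁻¹ *
      ∑ j ∈ range D, ∑ k ∈ range D, α j * α k * Om' j k / (ψ j * ψ k) ≤ C)
    -- observed variables and the factor score from the conditional-independence model
    (Z : ℕ → Om → ℝ) (hZ : ∀ j ω, Z j ω = α j * W ω + ψ j * ε j ω)
    (qD : ℕ → ℝ) (hqD : ∀ D, qD D = ∑ j ∈ range D, α j ^ 2 / ψ j ^ 2)
    (wt : ℕ → Om → ℝ)
    (hwt : ∀ D ω,
      wt D ω = (1 + qD D)⁻¹ * ∑ j ∈ range D, (α j / ψ j ^ 2) * Z j ω) :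
    IsBigOp μ (fun D ω => wt D ω - W ω) (fun D => (D:ℝ) ^ (-(1/2 : ℝ))) := by
  -- basic facts on ψ and qD
  have hψpos : ∀ j, 0 < ψ j := by
    intro j
    rw [hψ]
    have h := abs_lt.1 (hα j)
    exact Real.sqrt_pos.2 (by nlinarith)
  have hqDnn : ∀ D, 0 ≤ qD D := by
    intro D
    rw [hqD]
    exact Finset.sum_nonneg fun j _ => div_nonneg (sq_nonneg _) (sq_nonneg _)
  have hqDpos : ∀ D, (0:ℝ) < 1 + qD D := fun D => by linarith [hqDnn D]
  -- the disturbance aggregate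
  set T : ℕ → Om → ℝ := fun D ω => ∑ j ∈ range D, (α j / ψ j) * ε j ω with hT
  have hTmeas : ∀ D, Measurable (T D) :=
    fun D => Finset.measurable_sum _ fun j _ => (hεmeas j).const_mul _
  -- key algebraic identity
  have hkey : ∀ D ω, wt D ω - W ω = (1 + qD D)⁻¹ * (T D ω - W ω) := by
    intro D ω
    have h1 : (1 + qD D) ≠ 0 := (hqDpos D).ne'
    have hsum : ∑ j ∈ range D, (α j / ψ j ^ 2) * Z j ω = qD D * W ω + T D ω := by
      rw [hqD, Finset.sum_mul, hT, ← Finset.sum_add_distrib]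
      refine Finset.sum_congr rfl fun j _ => ?_
      rw [hZ]
      have hj := (hψpos j).ne'
      field_simp
    rw [hwt, hsum]
    field_simp
    ring
  -- law of T D
  have hTlaw : ∀ D, μ.map (T D) = gaussianReal 0
      (Real.toNNReal (∑ j ∈ range D, ∑ k ∈ range D,
        (α j / ψ j) * (α k / ψ k) * Om' j k)) :=
    fun D => hgauss (range D) (fun j => α j / ψ j)
  intro ε' hε'
  obtain ⟨C, hC⟩ := hvar
  set C' : ℝ := max C 1 with hC'def
  have hC1 : (1:ℝ) ≤ C' := le_max_right _ _
  have hC0 : (0:ℝ) < C' := lt_of_lt_of_le one_pos hC1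
  have hsC1 : (1:ℝ) ≤ Real.sqrt C' := Real.one_le_sqrt.2 hC1
  have hsC0 : (0:ℝ) < Real.sqrt C' := lt_of_lt_of_le one_pos hsC1
  -- pick a tail threshold
  have hhalf : (0:ENNReal) < ENNReal.ofReal (ε' / 2) := ENNReal.ofReal_pos.2 (by linarith)
  obtain ⟨n₀, hn₀⟩ := (gtail_tendsto.eventually_lt_const hhalf).exists
  set t₀ : ℝ := (n₀ : ℝ) with ht₀def
  have ht₀nn : 0 ≤ t₀ := Nat.cast_nonneg n₀
  -- choose M
  set M : ℝ := 4 * ((t₀ + 1) * Real.sqrt C') / q with hMdef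
  have hM0 : 0 < M := by positivity
  have hMq : M * q / 4 = (t₀ + 1) * Real.sqrt C' := by
    rw [hMdef, div_mul_cancel₀ _ hqpos.ne']
    ring
  refine ⟨M, hM0, ?_⟩
  have hq' : Tendsto (fun D : ℕ => (D:ℝ)⁻¹ * qD D) atTop (nhds q) := by
    simpa only [hqD] using hq
  filter_upwards [hq'.eventually (eventually_gt_nhds (half_lt_self hqpos)),
    eventually_ge_atTop 1] with D hDq hD1
  -- real facts about D
  have hD0 : (0:ℝ) < (D:ℝ) := by exact_mod_cast Nat.lt_of_lt_of_le Nat.zero_lt_one hD1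
  set s : ℝ := Real.sqrt D with hsdef
  have hs1 : (1:ℝ) ≤ s := Real.one_le_sqrt.2 (by exact_mod_cast hD1)
  have hs0 : (0:ℝ) < s := lt_of_lt_of_le one_pos hs1
  have hss : s * s = (D:ℝ) := Real.mul_self_sqrt hD0.le
  have hrp : ((D:ℝ) ^ (-(1/2 : ℝ))) = s⁻¹ := by
    rw [Real.rpow_neg hD0.le, hsdef, Real.sqrt_eq_rpow]
  have hqDD : q / 2 * (D:ℝ) ≤ qD D := by
    have h := hDq
    rw [inv_mul_eq_div, lt_div_iff₀ hD0] at h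
    linarith
  -- the threshold a
  set a : ℝ := M * s⁻¹ * (1 + qD D) / 2 with hadef
  have ha0 : 0 < a :=
    div_pos (mul_pos (mul_pos hM0 (inv_pos.2 hs0)) (hqDpos D)) two_pos
  -- lower bounds for a
  have haMq : M * q / 4 * s ≤ a := by
    have hmul : M * q / 4 * s * s ≤ a * s := by
      have has : a * s = M * (1 + qD D) / 2 := by
        rw [hadef]
        field_simp
      rw [has]
      have h2 : q / 2 * (D:ℝ) ≤ 1 + qD D := by linarith
      have h3 := mul_le_mul_of_nonneg_left h2 hM0.le
      calc M * q / 4 * s * s = M * (q / 2 * (s * s)) / 2 := by ring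
        _ = M * (q / 2 * (D:ℝ)) / 2 := by rw [hss]
        _ ≤ M * (1 + qD D) / 2 := by linarith
    exact le_of_mul_le_mul_right hmul hs0
  have hat₀ : t₀ ≤ a := by
    have h1 : t₀ + 1 ≤ M * q / 4 := by
      rw [hMq]
      nlinarith [hsC1, ht₀nn]
    nlinarith [haMq, hs1, ht₀nn, hM0, hqpos]
  have hadiv : t₀ ≤ a / (Real.sqrt C' * s) := by
    have h1 : (t₀ + 1) * (Real.sqrt C' * s) ≤ a := by
      calc (t₀ + 1) * (Real.sqrt C' * s) = (t₀ + 1) * Real.sqrt C' * s := by ring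
        _ = M * q / 4 * s := by rw [hMq]
        _ ≤ a := haMq
    rw [le_div_iff₀ (by positivity : (0:ℝ) < Real.sqrt C' * s)]
    exact le_trans (mul_le_mul_of_nonneg_right (by linarith) (by positivity)) h1
  -- subset into two tail events
  have hsub : {ω | M * (D:ℝ) ^ (-(1/2 : ℝ)) < |wt D ω - W ω|} ⊆
      {ω | a < |T D ω|} ∪ {ω | a < |W ω|} := by
    intro ω hω
    simp only [Set.mem_setOf_eq] at hω
    by_contra hcon
    simp only [Set.mem_union, Set.mem_setOf_eq, not_or, not_lt] at hcon
    obtain ⟨h1, h2⟩ := hcon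
    have habs : |wt D ω - W ω| ≤ (1 + qD D)⁻¹ * (|T D ω| + |W ω|) := by
      rw [hkey, abs_mul, abs_of_pos (inv_pos.2 (hqDpos D))]
      exact mul_le_mul_of_nonneg_left (abs_sub _ _) (inv_pos.2 (hqDpos D)).le
    have hle : (1 + qD D)⁻¹ * (|T D ω| + |W ω|) ≤ (1 + qD D)⁻¹ * (2 * a) := by
      exact mul_le_mul_of_nonneg_left (by linarith) (inv_pos.2 (hqDpos D)).le
    have heq : (1 + qD D)⁻¹ * (2 * a) = M * s⁻¹ := by
      calc (1 + qD D)⁻¹ * (2 * a)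
          = (M * s⁻¹) * ((1 + qD D)⁻¹ * (1 + qD D)) := by rw [hadef]; ring
        _ = M * s⁻¹ := by rw [inv_mul_cancel₀ (hqDpos D).ne', mul_one]
    rw [hrp] at hω
    linarith
  -- measure bound for T D
  have hTbound : μ {ω | a < |T D ω|} ≤ gtail t₀ := by
    have hmeas := gtail_meas_set a
    have h1 : μ {ω | a < |T D ω|} = (μ.map (T D)) {x | a < |x|} := by
      rw [Measure.map_apply (hTmeas D) hmeas]
      rfl
    rw [h1, hTlaw D]
    -- variance bound
    set V : ℝ := ∑ j ∈ range D, ∑ k ∈ range D, (α j / ψ j) * (α k / ψ k) * Om' j k with hVdef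
    have hVeq : V = ∑ j ∈ range D, ∑ k ∈ range D,
        α j * α k * Om' j k / (ψ j * ψ k) := by
      refine Finset.sum_congr rfl fun j _ => Finset.sum_congr rfl fun k _ => ?_
      ring
    have hVle : V ≤ C' * D := by
      have h2 := hC D
      rw [inv_mul_eq_div, div_le_iff₀ hD0] at h2
      rw [hVeq]
      calc (∑ j ∈ range D, ∑ k ∈ range D, α j * α k * Om' j k / (ψ j * ψ k))
          ≤ C * D := h2
        _ ≤ C' * D := by nlinarith [le_max_left C 1]
    have hsqrt : Real.sqrt (Real.toNNReal V) ≤ Real.sqrt C' * s := by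
      rw [← Real.sqrt_mul hC0.le]
      refine Real.sqrt_le_sqrt ?_
      rw [Real.coe_toNNReal']
      exact max_le hVle (by positivity)
    calc gaussianReal 0 (Real.toNNReal V) {x | a < |x|}
        ≤ gtail (a / (Real.sqrt C' * s)) := gauss_tail_le _ ha0 (by positivity) hsqrt
      _ ≤ gtail t₀ := gtail_anti hadiv
  -- measure bound for W
  have hWbound : μ {ω | a < |W ω|} ≤ gtail t₀ := by
    have h1 : μ {ω | a < |W ω|} = (μ.map W) {x | a < |x|} := by
      rw [Measure.map_apply hWmeas (gtail_meas_set a)]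
      rfl
    rw [h1, hWlaw]
    exact gtail_anti hat₀
  -- combine
  calc μ {ω | M * (D:ℝ) ^ (-(1/2 : ℝ)) < |wt D ω - W ω|}
      ≤ μ ({ω | a < |T D ω|} ∪ {ω | a < |W ω|}) := measure_mono hsub
    _ ≤ μ {ω | a < |T D ω|} + μ {ω | a < |W ω|} := measure_union_le _ _
    _ ≤ gtail t₀ + gtail t₀ := add_le_add hTbound hWbound
    _ < ENNReal.ofReal (ε' / 2) + ENNReal.ofReal (ε' / 2) :=
        ENNReal.add_lt_add hn₀ hn₀
    _ = ENNReal.ofReal ε' := by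
        rw [← ENNReal.ofReal_add (by linarith) (by linarith)]
        norm_num
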